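/- Let G be a finite non-cyclic abelian group and let M be a maximal cyclic subgroup of G. Then the following are equivalent: (1) for every α ∈ M̃ (the set of non-generators of M) there exists β ∈ G \ M such that α ∈ ⟨β⟩; (2) every Sylow subgroup of G is non-cyclic. -/

import Mathlib

/-- The power graph of a group `G`. -/
def powerGraph (G : Type*) [Group G] : SimpleGraph G where
  Adj x y := x ≠ y ∧ (x ∈ Subgroup.zpowers y ∨ y ∈ Subgroup.zpowers x)
  symm := ⟨fun x y h => ⟨h.1.symm, h.2.symm⟩⟩
  loopless := ⟨fun x h => h.1 rfl⟩

/-- `X` is a (vertex) cut-set of the power graph of `G`: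
removing `X` leaves a disconnected induced subgraph. -/
def IsCutSet {G : Type*} [Group G] (X : Set G) : Prop :=
  ¬ ((powerGraph G).induce Xᶜ).Preconnected

/-- `X` is a minimal cut-set of the power graph of `G`. -/
def IsMinimalCutSet {G : Type*} [Group G] (X : Set G) : Prop :=
  IsCutSet X ∧ ∀ x ∈ X, ¬ IsCutSet (X \ {x})

/-- `X` is a minimum cut-set of the power graph of `G`. -/
def IsMinimumCutSet {G : Type*} [Group G] (X : Set G) : Prop :=
  IsCutSet X ∧ ∀ Y : Set G, IsCutSet Y → X.ncard ≤ Y.ncard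

/-- The vertex connectivity of the power graph of `G`: the least number of vertices
whose removal disconnects the graph or leaves only one vertex. -/
noncomputable def kappa (G : Type*) [Group G] : ℕ :=
  sInf {m | ∃ X : Set G, X.ncard = m ∧ (IsCutSet X ∨ Xᶜ.ncard = 1)}

/-- `M` is a maximal cyclic subgroup of `G`: cyclic and not properly contained
in any cyclic subgroup. -/
def IsMaxCyclic {G : Type*} [Group G] (M : Subgroup G) : Prop :=
  (∃ x : G, M = Subgroup.zpowers x) ∧
    ∀ N : Subgroup G, (∃ y : G, N = Subgroup.zpowers y) → M ≤ N → M = N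

/-- The set of non-generators of a (cyclic) subgroup `M` of `G`. -/
def nonGens {G : Type*} [Group G] (M : Subgroup G) : Set G :=
  {x | x ∈ M ∧ Subgroup.zpowers x ≠ M}

/-- `Mbar M` is the union of the sets `M ∩ ⟨y⟩` over all `y ∈ G \ M`. -/
def Mbar {G : Type*} [Group G] (M : Subgroup G) : Set G :=
  ⋃ y ∈ (M : Set G)ᶜ, ((M : Set G) ∩ (Subgroup.zpowers y : Set G))

/-- `(A, B)` is a separation of the induced subgraph of the power graph of `G` on `S`. -/
def IsSeparationOn {G : Type*} [Group G] (S A B : Set G) : Prop :=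
  A.Nonempty ∧ B.Nonempty ∧ Disjoint A B ∧ A ∪ B = S ∧
    ∀ a ∈ A, ∀ b ∈ B, ¬ (powerGraph G).Adj a b

/-!
Write `M = ⟨x⟩` and split elements of `G` into their `p`-parts, which lie in the Sylow
`p`-subgroup `P`, and their `p'`-parts. Elements of coprime orders generate, together, the cyclic
group of their product; so if `M ≤ ⟨a⟩ ⊔ ⟨b⟩` with `a`, `b` of coprime orders, maximality of `M`
forces `a, b ∈ M`. The non-generators of `⟨x⟩` are the `x ^ (p e)` with `p ∣ ord x`.

If `P = ⟨c⟩` is cyclic, this gives `P ≤ M`, so `x ^ p` is a non-generator; and if `x ^ p ∈ ⟨β⟩`,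
the `p'`-part of `β` generates the `p'`-part of `x`, so again `β ∈ M`. If instead every `w` with
`w ^ p = 1` lies in `M`, induction on `i` puts every `g` with `g ^ p ^ i = 1` into `M`, so `P ≤ M`
is cyclic. Hence a non-cyclic `P` contains such a `w ∉ M`, and `x ^ (p e) = a ^ p b` lies in
`⟨a b⟩` for `a = x_p ^ e w`, `b = x_{p'} ^ (p e)`, while `a b ∉ M`.
-/

open Subgroup

section Cyclic

variable {G : Type*} [Group G] [Finite G]

theorem zpowers_pow_eq_zpowers_iff {x : G} {c : ℕ} :
    zpowers (x ^ c) = zpowers x ↔ c.Coprime (orderOf x) := by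
  constructor
  · intro h
    have hord : orderOf (x ^ c) = orderOf x := by rw [← Nat.card_zpowers, h, Nat.card_zpowers]
    rw [orderOf_pow, Nat.div_eq_self] at hord
    exact Nat.coprime_comm.1 (hord.resolve_left (orderOf_pos x).ne')
  · intro h
    obtain ⟨m, hm⟩ := exists_pow_eq_self_of_coprime h
    have hx : x ∈ zpowers (x ^ c) := by
      have := npow_mem_zpowers (x ^ c) m
      rwa [hm] at this
    exact le_antisymm (zpowers_le.2 (npow_mem_zpowers x c)) (zpowers_le.2 hx)

theorem mem_nonGens_zpowers_iff {x α : G} :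
    α ∈ nonGens (zpowers x) ↔ ∃ p, p.Prime ∧ p ∣ orderOf x ∧ ∃ e : ℕ, α = x ^ (p * e) := by
  constructor
  · rintro ⟨hα, hgen⟩
    obtain ⟨c, rfl⟩ := mem_powers_iff_mem_zpowers.2 hα
    obtain ⟨p, hp, ⟨e, rfl⟩, hpx⟩ :=
      Nat.Prime.not_coprime_iff_dvd.1 (mt zpowers_pow_eq_zpowers_iff.2 hgen)
    exact ⟨p, hp, hpx, e, rfl⟩
  · rintro ⟨p, hp, hpx, e, rfl⟩
    refine ⟨npow_mem_zpowers x _, fun h => ?_⟩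
    exact Nat.Prime.not_coprime_iff_dvd.2 ⟨p, hp, dvd_mul_right p e, hpx⟩
      (zpowers_pow_eq_zpowers_iff.1 h)

end Cyclic

section CommGroup

variable {G : Type*} [CommGroup G]

theorem mem_zpowers_mul_of_coprime {a b : G} (h : (orderOf a).Coprime (orderOf b)) :
    a ∈ zpowers (a * b) := by
  obtain ⟨m, hm⟩ := exists_pow_eq_self_of_coprime h.symm
  have hab : (a * b) ^ orderOf b = a ^ orderOf b := by
    rw [mul_pow, pow_orderOf_eq_one, mul_one]
  have := pow_mem (npow_mem_zpowers (a * b) (orderOf b)) m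
  rwa [hab, hm] at this

theorem zpowers_mul_eq_sup_of_coprime {a b : G} (h : (orderOf a).Coprime (orderOf b)) :
    zpowers (a * b) = zpowers a ⊔ zpowers b := by
  refine le_antisymm (zpowers_le.2 (mul_mem_sup (mem_zpowers a) (mem_zpowers b))) ?_
  refine sup_le (zpowers_le.2 (mem_zpowers_mul_of_coprime h)) (zpowers_le.2 ?_)
  exact mul_comm b a ▸ mem_zpowers_mul_of_coprime h.symm

theorem IsMaxCyclic.mem_of_le_sup {M : Subgroup G} (hM : IsMaxCyclic M) {a b : G}
    (h : (orderOf a).Coprime (orderOf b)) (hle : M ≤ zpowers a ⊔ zpowers b) :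
    a ∈ M ∧ b ∈ M := by
  rw [← zpowers_mul_eq_sup_of_coprime h] at hle
  rw [hM.2 _ ⟨_, rfl⟩ hle, zpowers_mul_eq_sup_of_coprime h]
  exact ⟨mem_sup_left (mem_zpowers a), mem_sup_right (mem_zpowers b)⟩

theorem Sylow.mem_of_pow_prime_pow_eq_one {p : ℕ} [Fact p.Prime] (P : Sylow p G) {g : G} {i : ℕ}
    (hg : g ^ p ^ i = 1) : g ∈ P := by
  obtain ⟨s, -, hs⟩ := (Nat.dvd_prime_pow Fact.out).1 (orderOf_dvd_of_pow_eq_one hg)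
  have hpg : IsPGroup p (zpowers g) := IsPGroup.of_card (by rw [Nat.card_zpowers, hs])
  exact hpg.le_sylow_of_normal P (mem_zpowers g)

variable [Finite G] {p : ℕ} [Fact p.Prime]

namespace Sylow

variable (P : Sylow p G)

theorem coprime_orderOf {a b : G} (ha : a ∈ P) (hb : b ^ (P : Subgroup G).index = 1) :
    (orderOf a).Coprime (orderOf b) :=
  (P.card_coprime_index.coprime_dvd_left ((P : Subgroup G).orderOf_dvd_natCard ha))
    |>.coprime_dvd_right (orderOf_dvd_of_pow_eq_one hb)

theorem eq_one_of_mem_of_pow_index_eq_one {a : G} (ha : a ∈ P)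
    (ha' : a ^ (P : Subgroup G).index = 1) : a = 1 :=
  orderOf_eq_one_iff.1 ((Nat.coprime_self _).1 (P.coprime_orderOf ha ha'))

theorem coprime_orderOf_of_pow_index_eq_one {b : G} (hb : b ^ (P : Subgroup G).index = 1) :
    p.Coprime (orderOf b) :=
  (Nat.Prime.coprime_iff_not_dvd Fact.out).2 fun h =>
    P.not_dvd_index (h.trans (orderOf_dvd_of_pow_eq_one hb))

/-- `g ^ k` is the `p'`-part of `g` and `g / g ^ k` its `p`-part. -/
theorem exists_pow_split :
    ∃ k : ℕ, ∀ g : G, g / g ^ k ∈ P ∧ (g ^ k) ^ (P : Subgroup G).index = 1 := by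
  obtain ⟨k, hk0, hk1⟩ := Nat.chineseRemainder P.card_coprime_index 0 1
  have hexp : ∀ g : G, g ^ (Nat.card P * (P : Subgroup G).index) = 1 := fun g => by
    rw [card_mul_index]; exact pow_card_eq_one'
  refine ⟨k, fun g => ⟨?_, ?_⟩⟩
  · apply P.mem_of_pow_prime_pow_eq_one (i := (Nat.card G).factorization p)
    rw [← P.card_eq_multiplicity, div_pow, ← pow_mul, div_eq_one]
    have h := (hk1.mul_right' (Nat.card P)).of_dvd
      (orderOf_dvd_of_pow_eq_one (mul_comm (Nat.card P) _ ▸ hexp g))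
    rw [one_mul] at h
    exact (pow_eq_pow_iff_modEq.2 h).symm
  · obtain ⟨t, ht⟩ := Nat.modEq_zero_iff_dvd.1 hk0
    rw [← pow_mul, ht, mul_right_comm, pow_mul, hexp, one_pow]

end Sylow

theorem IsMaxCyclic.mem_of_pow_prime_mem {x : G} (hM : IsMaxCyclic (zpowers x))
    (P : Sylow p G) (h : ∀ w : G, w ^ p = 1 → w ∈ zpowers x) {g : G} (hgP : g ∈ P)
    (hgp : g ^ p ∈ zpowers x) : g ∈ zpowers x := by
  obtain ⟨k, hk⟩ := P.exists_pow_split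
  obtain ⟨hxP, hxk⟩ := hk x
  set y := x / x ^ k with hy
  have hyM : y ∈ zpowers x := div_mem (mem_zpowers x) (npow_mem_zpowers x k)
  obtain ⟨m, hm : x ^ m = g ^ p⟩ := mem_powers_iff_mem_zpowers.2 hgp
  have hsplit : y ^ m * (x ^ k) ^ m = g ^ p := by rw [← mul_pow, hy, div_mul_cancel, hm]
  have hz : (x ^ k) ^ m = 1 := by
    refine P.eq_one_of_mem_of_pow_index_eq_one ?_
      (by rw [← pow_mul, mul_comm, pow_mul, hxk, one_pow])
    have := div_mem (pow_mem hgP p) (pow_mem hxP m)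
    rwa [← hsplit, mul_div_cancel_left] at this
  rw [hz, mul_one] at hsplit
  by_cases hpm : p ∣ m
  · obtain ⟨t, rfl⟩ := hpm
    have hw : (g / y ^ t) ^ p = 1 := by rw [div_pow, ← pow_mul, mul_comm t, hsplit, div_self']
    have := mul_mem (h _ hw) (pow_mem hyM t)
    rwa [div_mul_cancel] at this
  · -- now the `p`-part `y` of `x` is a power of `g`, and maximality absorbs `g`
    have hcop : m.Coprime (orderOf y) :=
      (Nat.Coprime.pow_right _ (Nat.coprime_comm.1 ((Nat.Prime.coprime_iff_not_dvd Fact.out).2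
        hpm))).coprime_dvd_right (P.card_eq_multiplicity ▸ (P : Subgroup G).orderOf_dvd_natCard hxP)
    obtain ⟨t, ht⟩ := exists_pow_eq_self_of_coprime hcop
    have hyg : y ∈ zpowers g := by rw [← ht, hsplit, ← pow_mul]; exact npow_mem_zpowers g _
    refine (hM.mem_of_le_sup (P.coprime_orderOf hgP hxk) (zpowers_le.2 ?_)).1
    have := Subgroup.mul_mem_sup hyg (mem_zpowers (x ^ k))
    rwa [hy, div_mul_cancel] at this

theorem IsMaxCyclic.sylow_le_of_forall_pow_eq_one_mem {x : G} (hM : IsMaxCyclic (zpowers x))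
    (P : Sylow p G) (h : ∀ w : G, w ^ p = 1 → w ∈ zpowers x) :
    (P : Subgroup G) ≤ zpowers x := by
  have key : ∀ i : ℕ, ∀ g : G, g ^ p ^ i = 1 → g ∈ zpowers x := by
    intro i
    induction i with
    | zero =>
      intro g hg
      rw [pow_zero, pow_one] at hg
      exact hg ▸ one_mem _
    | succ i ih =>
      intro g hg
      exact hM.mem_of_pow_prime_mem P h (P.mem_of_pow_prime_pow_eq_one hg)
        (ih _ (by rw [← pow_mul, ← pow_succ']; exact hg))
  intro g hg
  refine key ((Nat.card G).factorization p) g ?_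
  rw [← P.card_eq_multiplicity]
  exact orderOf_dvd_iff_pow_eq_one.1 ((P : Subgroup G).orderOf_dvd_natCard hg)

theorem IsMaxCyclic.exists_notMem_pow_mem_zpowers {x : G} (hM : IsMaxCyclic (zpowers x))
    (P : Sylow p G) (hP : ¬ IsCyclic P) (e : ℕ) :
    ∃ β, β ∉ zpowers x ∧ x ^ (p * e) ∈ zpowers β := by
  obtain ⟨w, hwp, hwM⟩ : ∃ w : G, w ^ p = 1 ∧ w ∉ zpowers x := by
    by_contra! h
    exact hP (isCyclic_of_le (hM.sylow_le_of_forall_pow_eq_one_mem P h))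
  obtain ⟨k, hk⟩ := P.exists_pow_split
  obtain ⟨hxP, hxk⟩ := hk x
  set a := (x / x ^ k) ^ e * w
  set b := (x ^ k) ^ (p * e)
  have haP : a ∈ P :=
    mul_mem (pow_mem hxP e) (P.mem_of_pow_prime_pow_eq_one (i := 1) (by rwa [pow_one]))
  have hb : b ^ (P : Subgroup G).index = 1 := by
    rw [← pow_mul, mul_comm, pow_mul, hxk, one_pow]
  refine ⟨a * b, fun hβ => hwM ?_, ?_⟩
  · have hbM : b ∈ zpowers x := pow_mem (npow_mem_zpowers x k) _
    have hyM : (x / x ^ k) ^ e ∈ zpowers x :=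
      pow_mem (div_mem (mem_zpowers x) (npow_mem_zpowers x k)) e
    exact (mul_mem_cancel_left hyM).1 ((mul_mem_cancel_right hbM).1 hβ)
  · have hα : x ^ (p * e) = a ^ p * b := by
      rw [mul_pow, hwp, mul_one, ← pow_mul, mul_comm e p, ← mul_pow, div_mul_cancel]
    rw [hα, zpowers_mul_eq_sup_of_coprime (P.coprime_orderOf haP hb)]
    exact mul_mem_sup (pow_mem (mem_zpowers a) p) (mem_zpowers b)

theorem IsMaxCyclic.exists_mem_nonGens_forall_mem_zpowers {x : G}
    (hM : IsMaxCyclic (zpowers x)) (hpG : p ∣ Nat.card G) (P : Sylow p G) (hP : IsCyclic P) :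
    ∃ α ∈ nonGens (zpowers x), ∀ β, α ∈ zpowers β → β ∈ zpowers x := by
  obtain ⟨c, hc⟩ := (P : Subgroup G).isCyclic_iff_exists_zpowers_eq_top.1 hP
  obtain ⟨k, hk⟩ := P.exists_pow_split
  have hmax : ∀ β : G, x ^ k ∈ zpowers (β ^ k) →
      (P : Subgroup G) ≤ zpowers x ∧ β ∈ zpowers x := by
    intro β hβ
    obtain ⟨hβP, hβk⟩ := hk β
    obtain ⟨hcM, hβkM⟩ := hM.mem_of_le_sup (P.coprime_orderOf (hc ▸ mem_zpowers c) hβk)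
      (zpowers_le.2 (div_mul_cancel x (x ^ k) ▸ mul_mem_sup (hc ▸ (hk x).1) hβ))
    have hPM : (P : Subgroup G) ≤ zpowers x := hc ▸ zpowers_le.2 hcM
    exact ⟨hPM, div_mul_cancel β (β ^ k) ▸ mul_mem (hPM hβP) hβkM⟩
  have hpx : p ∣ orderOf x := by
    rw [← Nat.card_zpowers]
    exact (P.dvd_card_of_dvd_card hpG).trans (card_dvd_of_le (hmax x (mem_zpowers _)).1)
  refine ⟨x ^ p, mem_nonGens_zpowers_iff.2 ⟨p, Fact.out, hpx, 1, by rw [mul_one]⟩, fun β hβ => ?_⟩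
  obtain ⟨t, ht⟩ := exists_pow_eq_self_of_coprime (P.coprime_orderOf_of_pow_index_eq_one (hk x).2)
  have hxpk : (x ^ k) ^ p ∈ zpowers (β ^ k) := by
    rw [← pow_mul, mul_comm, pow_mul]
    simpa only [MonoidHom.map_zpowers, powMonoidHom_apply]
      using mem_map_of_mem (powMonoidHom k : G →* G) hβ
  exact (hmax β (ht ▸ pow_mem hxpk t)).2

end CommGroup

theorem statement_17_general {G : Type*} [CommGroup G] [Fintype G]
    (M : Subgroup G) (hM : IsMaxCyclic M) :
    (∀ α ∈ nonGens M, ∃ β : G, β ∉ M ∧ α ∈ Subgroup.zpowers β) ↔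
    (∀ q : ℕ, q.Prime → q ∣ Nat.card G →
      ∀ P : Sylow q G, ¬ IsCyclic ↥((P : Subgroup G))) := by
  obtain ⟨x, rfl⟩ := hM.1
  constructor
  · intro h q hq hqG P hP
    have := Fact.mk hq
    obtain ⟨α, hα, hαM⟩ := hM.exists_mem_nonGens_forall_mem_zpowers hqG P hP
    obtain ⟨β, hβ, hαβ⟩ := h α hα
    exact hβ (hαM β hαβ)
  · intro h α hα
    obtain ⟨p, hp, hpx, e, rfl⟩ := mem_nonGens_zpowers_iff.1 hα
    have := Fact.mk hp
    obtain ⟨P⟩ : Nonempty (Sylow p G) := inferInstance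
    exact hM.exists_notMem_pow_mem_zpowers P (h p hp (hpx.trans (orderOf_dvd_natCard x)) P) e

/-- Proposition (nongen-adjacency): `G` finite non-cyclic abelian, `M` a maximal cyclic
subgroup; then: every non-generator of `M` lies in `⟨β⟩` for some `β ∈ G \ M` iff every
Sylow subgroup of `G` (at a prime dividing `|G|`) is non-cyclic. -/
theorem statement_17 {G : Type*} [CommGroup G] [Fintype G] (hnc : ¬ IsCyclic G)
    (M : Subgroup G) (hM : IsMaxCyclic M) :
    (∀ α ∈ nonGens M, ∃ β : G, β ∉ M ∧ α ∈ Subgroup.zpowers β) ↔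
    (∀ q : ℕ, q.Prime → q ∣ Nat.card G →
      ∀ P : Sylow q G, ¬ IsCyclic ↥((P : Subgroup G))) :=
  statement_17_general M hM
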